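/- The diamond graph H = K₄ minus an edge is f_{3,v}-edge-choosable, where v is a vertex of degree 2: for any list assignment ℓ giving each of the two edges incident to v a list of size at least 2 and each of the other three edges a list of size at least 3, H has a proper edge coloring from the lists. -/
import Mathlib


open SimpleGraph

/-- Adjacency in the line graph `L(G)`: two distinct edges sharing an endpoint. -/
def lineAdj {V : Type*} (G : SimpleGraph V) (e f : G.edgeSet) : Prop :=
  e ≠ f ∧ ∃ x : V, x ∈ (e : Sym2 V) ∧ x ∈ (f : Sym2 V)

/-- `D` is an orientation of the (loopless) adjacency relation `Adj`:
every arc of `D` is an edge, and every edge gets at least one of its two arcs. -/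
def IsOrientation {α : Type*} (Adj : α → α → Prop) (D : α → α → Prop) : Prop :=
  (∀ a b, D a b → Adj a b) ∧ (∀ a b, Adj a b → D a b ∨ D b a)

/-- A digraph (relation) is kernel-perfect if every induced subdigraph has a kernel:
an independent set `S` such that every vertex outside `S` has an out-neighbor in `S`. -/
def KernelPerfect {α : Type*} (D : α → α → Prop) : Prop :=
  ∀ Z : Set α, ∃ S ⊆ Z, (∀ a ∈ S, ∀ b ∈ S, ¬ D a b) ∧
    ∀ z ∈ Z, z ∉ S → ∃ s ∈ S, D z s

/-- Out-degree of a vertex in a digraph given as a relation. -/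
noncomputable def outDeg {α : Type*} (D : α → α → Prop) (a : α) : ℕ := {b | D a b}.ncard

/-- Degree of a vertex. -/
noncomputable def deg {V : Type*} (G : SimpleGraph V) (v : V) : ℕ := (G.neighborSet v).ncard

/-- Maximum degree. -/
noncomputable def maxDeg {V : Type*} (G : SimpleGraph V) : ℕ := sSup (Set.range (deg G))

/-- `G` is `f`-edge-orientable: `L(G)` admits a kernel-perfect orientation with
`1 + d⁺(e) ≤ f e` for every edge `e`. -/
def EdgeOrientable {V : Type*} (G : SimpleGraph V) (f : G.edgeSet → ℕ) : Prop :=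
  ∃ D : G.edgeSet → G.edgeSet → Prop,
    IsOrientation (lineAdj G) D ∧ KernelPerfect D ∧ ∀ e, outDeg D e + 1 ≤ f e

open Classical in
/-- The function `f_{k,v}`: `deg v` on edges incident to `v`, and `k` elsewhere. -/
noncomputable def fkv {V : Type*} (G : SimpleGraph V) (k : ℕ) (v : V) (e : G.edgeSet) : ℕ :=
  if v ∈ (e : Sym2 V) then deg G v else k

/-- `G` is strongly `k`-edge-orientable. -/
def StronglyEdgeOrientable {V : Type*} (G : SimpleGraph V) (k : ℕ) : Prop :=
  ∀ v : V, EdgeOrientable G (fkv G k v)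

/-- `G` is `f`-edge-choosable. -/
def FEdgeChoosable {V : Type*} (G : SimpleGraph V) (f : G.edgeSet → ℕ) : Prop :=
  ∀ ℓ : G.edgeSet → Finset ℕ, (∀ e, f e ≤ (ℓ e).card) →
    ∃ φ : G.edgeSet → ℕ, (∀ e, φ e ∈ ℓ e) ∧
      ∀ e₁ e₂, lineAdj G e₁ e₂ → φ e₁ ≠ φ e₂

/-- `G ∈ G*`: any two distinct odd cycles share at most one edge. -/
def InGStar {V : Type*} (G : SimpleGraph V) : Prop :=
  ∀ (u w : V) (c₁ : G.Walk u u) (c₂ : G.Walk w w),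
    c₁.IsCycle → c₂.IsCycle → Odd c₁.length → Odd c₂.length →
    {e | e ∈ c₁.edges} ≠ {e | e ∈ c₂.edges} →
    ({e | e ∈ c₁.edges} ∩ {e | e ∈ c₂.edges}).ncard ≤ 1

/-- `G` is 2-connected: connected, and still connected after deleting any one vertex. -/
def TwoConn {V : Type*} (G : SimpleGraph V) : Prop :=
  G.Connected ∧ ∀ v : V, (G.induce {w | w ≠ v}).Connected

/-- A block of `G`: a maximal 2-connected subgraph. -/
def IsBlock {V : Type*} (G : SimpleGraph V) (B : G.Subgraph) : Prop :=
  TwoConn B.coe ∧ ∀ B' : G.Subgraph, TwoConn B'.coe → B ≤ B' → B = B'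

/-- Vertex type of the theta graph with path lengths `l`: two hubs
(`Sum.inl false`, `Sum.inl true`) plus the internal vertices of each path. -/
def ThetaVert (l : List ℕ) : Type := Bool ⊕ (Σ i : Fin l.length, Fin (l.get i - 1))

/-- The theta graph `Θ_{l₁,…,l_k}`: two hubs joined by internally disjoint paths,
the `i`-th of length `l i`. -/
def thetaGraph (l : List ℕ) : SimpleGraph (ThetaVert l) :=
  SimpleGraph.fromRel (fun a b =>
    match a, b with
    | Sum.inl false, Sum.inl true => 1 ∈ l
    | Sum.inl false, Sum.inr ⟨_, j⟩ => j.val = 0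
    | Sum.inl true, Sum.inr ⟨i, j⟩ => j.val = l.get i - 2
    | Sum.inr ⟨i, j⟩, Sum.inr ⟨i', j'⟩ => i.val = i'.val ∧ j'.val = j.val + 1
    | _, _ => False)

/-- `v` (outside `c`) touches `w ∈ c`: some `v,w`-path meets `c` only at `w`. -/
def Touches {V : Type*} (G : SimpleGraph V) {u : V} (c : G.Walk u u) (v w : V) : Prop :=
  w ∈ c.support ∧ ∃ p : G.Walk v w, p.IsPath ∧ ∀ x ∈ p.support, x ∈ c.support → x = w

/-- The diamond graph `K₄ − e` on vertices `0 = v, 1 = w, 2 = z, 3 = u`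
with edges `vw, vz, wz, uw, uz`; the vertices `0` and `3` have degree 2. -/
def diamond : SimpleGraph (Fin 4) :=
  SimpleGraph.fromRel (fun a b =>
    (a, b) ∈ [((0 : Fin 4), (1 : Fin 4)), (0, 2), (1, 2), (1, 3), (2, 3)])

lemma erase1 {s : Finset ℕ} (x : ℕ) (h : 2 ≤ s.card) : (s.erase x).Nonempty :=
  Finset.card_pos.mp (by have := Finset.pred_card_le_card_erase (a := x) (s := s); omega)

lemma erase2 {s : Finset ℕ} (x y : ℕ) (h : 3 ≤ s.card) : ((s.erase x).erase y).Nonempty :=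
  Finset.card_pos.mp (by
    have h1 := Finset.pred_card_le_card_erase (a := x) (s := s)
    have h2 := Finset.pred_card_le_card_erase (a := y) (s := s.erase x); omega)

lemma subL (A B D E : Finset ℕ) (t : ℕ)
    (hBD : ∀ x ∈ B, x ∉ D) (htB : t ∉ B)
    (hA : A.Nonempty) (hB : 2 ≤ B.card) (hD : 3 ≤ D.card) (hE : 3 ≤ E.card) :
    ∃ a ∈ A, ∃ b ∈ B, ∃ d ∈ D, ∃ e ∈ E,
      a ≠ b ∧ a ≠ d ∧ d ≠ t ∧ e ≠ t ∧ e ≠ b ∧ d ≠ e := by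
  obtain ⟨a, ha⟩ := hA
  obtain ⟨b₀, hb₀B, hb₀a⟩ := Finset.exists_mem_ne (s := B) (by omega) a
  by_cases h : ∃ d ∈ (D.erase t).erase a, ∃ e ∈ (E.erase t).erase b₀, d ≠ e
  · obtain ⟨d, hd, e, he, hde⟩ := h
    rw [Finset.mem_erase, Finset.mem_erase] at hd he
    exact ⟨a, ha, b₀, hb₀B, d, hd.2.2, e, he.2.2,
      hb₀a.symm, (hd.1).symm, hd.2.1, he.2.1, he.1, hde⟩
  · push_neg at h
    obtain ⟨x, hx⟩ := erase2 t a hD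
    obtain ⟨y, hy⟩ := erase2 t b₀ hE
    have hxy : x = y := h x hx y hy
    subst hxy
    -- every element of D is t, a, or x
    have hDsub : ∀ d ∈ D, d = t ∨ d = a ∨ d = x := by
      intro d hd
      by_cases h1 : d = t; · exact Or.inl h1
      by_cases h2 : d = a; · exact Or.inr (Or.inl h2)
      exact Or.inr (Or.inr (h d (by simp [Finset.mem_erase, h1, h2, hd]) x hy))
    have hEsub : ∀ e ∈ E, e = t ∨ e = b₀ ∨ e = x := by
      intro e he
      by_cases h1 : e = t; · exact Or.inl h1
      by_cases h2 : e = b₀; · exact Or.inr (Or.inl h2)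
      exact Or.inr (Or.inr ((h x hx e (by simp [Finset.mem_erase, h1, h2, he])).symm))
    have haD : a ∈ D := by
      by_contra haD
      have : D ⊆ {t, x} := by
        intro d hd
        rcases hDsub d hd with h1 | h1 | h1
        · simp [h1]
        · exact absurd (h1 ▸ hd) haD
        · simp [h1]
      have := Finset.card_le_card this
      have : ({t, x} : Finset ℕ).card ≤ 2 := Finset.card_insert_le _ _ |>.trans (by simp)
      omega
    have hb₀E : b₀ ∈ E := by
      by_contra hb₀E
      have : E ⊆ {t, x} := by
        intro e he
        rcases hEsub e he with h1 | h1 | h1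
        · simp [h1]
        · exact absurd (h1 ▸ he) hb₀E
        · simp [h1]
      have := Finset.card_le_card this
      have : ({t, x} : Finset ℕ).card ≤ 2 := Finset.card_insert_le _ _ |>.trans (by simp)
      omega
    have haB : a ∉ B := fun hc => hBD a hc haD
    obtain ⟨b₁, hb₁B, hb₁⟩ := Finset.exists_mem_ne (s := B) (by omega) b₀
    rw [Finset.mem_erase, Finset.mem_erase] at hx hy
    refine ⟨a, ha, b₁, hb₁B, x, hx.2.2, b₀, hb₀E, ?_, ?_, hx.2.1, fun hc => htB (hc ▸ hb₀B),
      fun hc => hb₁ hc.symm, fun hc => hBD b₀ hb₀B (hc ▸ hx.2.2)⟩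
    · exact fun hc => haB (hc ▸ hb₁B)
    · exact fun hc => hx.1 hc.symm

lemma key (A B C D E : Finset ℕ) (hA : 2 ≤ A.card) (hB : 2 ≤ B.card)
    (hC : 3 ≤ C.card) (hD : 3 ≤ D.card) (hE : 3 ≤ E.card) :
    ∃ a ∈ A, ∃ b ∈ B, ∃ c ∈ C, ∃ d ∈ D, ∃ e ∈ E,
      a ≠ b ∧ a ≠ c ∧ a ≠ d ∧ b ≠ c ∧ b ≠ e ∧ c ≠ d ∧ c ≠ e ∧ d ≠ e := by
  by_cases h1 : ∃ x ∈ B, x ∈ D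
  · -- b = d = x
    obtain ⟨x, hxB, hxD⟩ := h1
    obtain ⟨a, haA, hax⟩ := Finset.exists_mem_ne (s := A) (by omega) x
    obtain ⟨c, hc⟩ := erase2 x a hC
    rw [Finset.mem_erase, Finset.mem_erase] at hc
    obtain ⟨e, he⟩ := erase2 x c hE
    rw [Finset.mem_erase, Finset.mem_erase] at he
    exact ⟨a, haA, x, hxB, c, hc.2.2, x, hxD, e, he.2.2,
      hax, fun hh => hc.1 hh.symm, hax, fun hh => hc.2.1 hh.symm,
      fun hh => he.2.1 hh.symm, hc.2.1, fun hh => he.1 hh.symm, fun hh => he.2.1 hh.symm⟩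
  push_neg at h1
  by_cases h2 : ∃ x ∈ A, x ∈ E
  · -- a = e = x
    obtain ⟨x, hxA, hxE⟩ := h2
    obtain ⟨b, hbB, hbx⟩ := Finset.exists_mem_ne (s := B) (by omega) x
    obtain ⟨c, hc⟩ := erase2 x b hC
    rw [Finset.mem_erase, Finset.mem_erase] at hc
    obtain ⟨d, hd⟩ := erase2 x c hD
    rw [Finset.mem_erase, Finset.mem_erase] at hd
    exact ⟨x, hxA, b, hbB, c, hc.2.2, d, hd.2.2, x, hxE,
      hbx.symm, fun hh => hc.2.1 hh.symm, fun hh => hd.2.1 hh.symm,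
      fun hh => hc.1 hh.symm, hbx, fun hh => hd.1 hh.symm, hc.2.1, hd.2.1⟩
  push_neg at h2
  by_cases h3 : ∃ t ∈ C, t ∉ B
  · obtain ⟨t, htC, htB⟩ := h3
    obtain ⟨a, ha, b, hb, d, hd, e, he, k1, k2, k3, k4, k5, k6⟩ :=
      subL (A.erase t) B D E t h1 htB (erase1 t hA) hB hD hE
    rw [Finset.mem_erase] at ha
    exact ⟨a, ha.2, b, hb, t, htC, d, hd, e, he,
      k1, ha.1, k2, fun hh => htB (hh ▸ hb), k5.symm, fun hh => k3 hh.symm, k4.symm, k6⟩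
  push_neg at h3
  by_cases h4 : ∃ t ∈ C, t ∉ A
  · obtain ⟨t, htC, htA⟩ := h4
    obtain ⟨b, hb, a, ha, e, he, d, hd, k1, k2, k3, k4, k5, k6⟩ :=
      subL (B.erase t) A E D t h2 htA (erase1 t hB) hA hE hD
    rw [Finset.mem_erase] at hb
    exact ⟨a, ha, b, hb.2, t, htC, d, hd, e, he,
      k1.symm, fun hh => htA (hh ▸ ha), k5.symm, hb.1, k2, fun hh => k4 hh.symm,
      fun hh => k3 hh.symm, k6.symm⟩
  push_neg at h4
  -- C ⊆ A ∩ B: pick a ≠ b ≠ c in C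
  obtain ⟨c1, hc1⟩ := Finset.card_pos.mp (by omega : 0 < C.card)
  obtain ⟨c2, hc2C, hc2⟩ := Finset.exists_mem_ne (s := C) (by omega) c1
  obtain ⟨c3, hc3⟩ := erase2 c1 c2 hC
  rw [Finset.mem_erase, Finset.mem_erase] at hc3
  obtain ⟨d, hd⟩ := erase2 c1 c3 hD
  rw [Finset.mem_erase, Finset.mem_erase] at hd
  obtain ⟨e, he⟩ := erase2 c3 d hE
  rw [Finset.mem_erase, Finset.mem_erase] at he
  exact ⟨c1, h4 c1 hc1, c2, h3 c2 hc2C, c3, hc3.2.2, d, hd.2.2, e, he.2.2,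
    hc2.symm, fun hh => hc3.2.1 hh.symm, fun hh => hd.2.1 hh.symm,
    fun hh => hc3.1 hh.symm, fun hh => h2 c2 (h4 c2 hc2C) (hh ▸ he.2.2),
    fun hh => hd.1 hh.symm, fun hh => he.2.1 hh.symm, fun hh => he.1 hh.symm⟩

instance : DecidableRel diamond.Adj := fun a b => by
  unfold diamond; rw [SimpleGraph.fromRel_adj]; infer_instance

open Classical in
/-- the diamond is `f_{3,v}`-edge-choosable for the degree-2
vertex `v = 0`: lists of size 2 on the two edges at `v` and size 3 elsewhere
always admit a proper edge coloring. -/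
theorem stmt15 :
    FEdgeChoosable diamond
      (fun e => if (0 : Fin 4) ∈ (e : Sym2 (Fin 4)) then 2 else 3) := by
  intro ℓ hℓ
  have enum : ∀ e : diamond.edgeSet, (e : Sym2 (Fin 4)) = s(0,1) ∨ (e : Sym2 (Fin 4)) = s(0,2)
      ∨ (e : Sym2 (Fin 4)) = s(1,2) ∨ (e : Sym2 (Fin 4)) = s(1,3)
      ∨ (e : Sym2 (Fin 4)) = s(2,3) := by
    have H : ∀ z ∈ diamond.edgeSet, z = s(0,1) ∨ z = s(0,2) ∨ z = s(1,2) ∨ z = s(1,3)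
        ∨ z = s(2,3) := by decide
    exact fun e => H e.val e.prop
  set E01 : diamond.edgeSet := ⟨s(0,1), by decide⟩ with hE01
  set E02 : diamond.edgeSet := ⟨s(0,2), by decide⟩ with hE02
  set E12 : diamond.edgeSet := ⟨s(1,2), by decide⟩ with hE12
  set E13 : diamond.edgeSet := ⟨s(1,3), by decide⟩ with hE13
  set E23 : diamond.edgeSet := ⟨s(2,3), by decide⟩ with hE23
  have hA : (if (0:Fin 4) ∈ (E01 : Sym2 (Fin 4)) then 2 else 3) ≤ (ℓ E01).card := hℓ E01
  rw [if_pos (by decide)] at hA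
  have hB : (if (0:Fin 4) ∈ (E02 : Sym2 (Fin 4)) then 2 else 3) ≤ (ℓ E02).card := hℓ E02
  rw [if_pos (by decide)] at hB
  have hC : (if (0:Fin 4) ∈ (E12 : Sym2 (Fin 4)) then 2 else 3) ≤ (ℓ E12).card := hℓ E12
  rw [if_neg (by decide)] at hC
  have hD : (if (0:Fin 4) ∈ (E13 : Sym2 (Fin 4)) then 2 else 3) ≤ (ℓ E13).card := hℓ E13
  rw [if_neg (by decide)] at hD
  have hE : (if (0:Fin 4) ∈ (E23 : Sym2 (Fin 4)) then 2 else 3) ≤ (ℓ E23).card := hℓ E23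
  rw [if_neg (by decide)] at hE
  obtain ⟨a, ha, b, hb, c, hc, d, hd, e, he, k1, k2, k3, k4, k5, k6, k7, k8⟩ :=
    key (ℓ E01) (ℓ E02) (ℓ E12) (ℓ E13) (ℓ E23) hA hB hC hD hE
  set F : Sym2 (Fin 4) → ℕ := fun z =>
    if z = s(0,1) then a else if z = s(0,2) then b else if z = s(1,2) then c
    else if z = s(1,3) then d else e with hF
  have F01 : F s(0,1) = a := if_pos rfl
  have F02 : F s(0,2) = b := by rw [hF]; simp only; rw [if_neg (by decide)]; simp
  have F12 : F s(1,2) = c := by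
    rw [hF]; simp only; rw [if_neg (by decide), if_neg (by decide)]; simp
  have F13 : F s(1,3) = d := by
    rw [hF]; simp only
    rw [if_neg (by decide), if_neg (by decide), if_neg (by decide)]; simp
  have F23 : F s(2,3) = e := by
    rw [hF]; simp only
    rw [if_neg (by decide), if_neg (by decide), if_neg (by decide), if_neg (by decide)]
  refine ⟨fun ed => F (ed : Sym2 (Fin 4)), ?_, ?_⟩
  · intro ed
    rcases enum ed with h | h | h | h | h <;>
      [ (rw [show ed = E01 from Subtype.ext h]);
        (rw [show ed = E02 from Subtype.ext h]);
        (rw [show ed = E12 from Subtype.ext h]);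
        (rw [show ed = E13 from Subtype.ext h]);
        (rw [show ed = E23 from Subtype.ext h]) ] <;>
      simp only [F01, F02, F12, F13, F23] <;> assumption
  · rintro e₁ e₂ ⟨hne, x, hx1, hx2⟩
    rcases enum e₁ with h1 | h1 | h1 | h1 | h1 <;>
      rcases enum e₂ with h2 | h2 | h2 | h2 | h2 <;>
      simp only [h1, h2, F01, F02, F12, F13, F23] <;>
      first
        | exact absurd (Subtype.ext (h1.trans h2.symm)) hne
        | (exfalso; rw [h1] at hx1; rw [h2] at hx2; revert x; decide)
        | omega
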